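/- (Identification without monotonicity under extended principal ignorability.) Assume randomization, extended principal ignorability, and that there is c > 0 with p_z(X) ≥ c P-a.s. Let m_z(X) be a σ(X)-measurable function satisfying m_z(X)·π_z·p_z(X) = E[Y·S·1(Z=z) | σ(X)] P-a.s. Then for every z ∈ {1,...,J} and every 𝔤 ∈ {0,1}^J with 𝔤(z) = 1: E[Y_z·1(G=𝔤)] = E[e_𝔤(X)·m_z(X)]. -/

import Mathlib

/-!
Write `S_z = ∑_{𝔤 ∋ z} 1(G = 𝔤)`. Taking `E[· | X]` and applying extended principal
ignorability to each summand gives `e_𝔤 E[Y_z S_z | X] = E[Y_z 1(G = 𝔤) | X] p_z`.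
Randomization gives `E[Y S 1(Z = z) | X] = π_z E[Y_z S_z | X]`, so `m_z p_z = E[Y_z S_z | X]`.
Cancelling `p_z ≥ c > 0` yields `e_𝔤 m_z = E[Y_z 1(G = 𝔤) | X]` a.s., whose expectation is the
claim.
-/

open MeasureTheory ProbabilityTheory

noncomputable section

namespace TruncationByDeath

variable {Ω : Type*} {𝒳 : Type*} [MeasurableSpace Ω] [MeasurableSpace 𝒳]

/-- The σ-algebra on `Ω` generated by the covariate map `X`. -/
def mX (X : Ω → 𝒳) : MeasurableSpace Ω := MeasurableSpace.comap X inferInstance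

/-- Real-valued indicator of the event `{Z = z}`. -/
def indic (Z : Ω → ℕ) (z : ℕ) : Ω → ℝ := fun ω => if Z ω = z then 1 else 0

/-- Observed survival status `S := ∑_z 1(Z=z) ⬝ S_z`. -/
def Sobs (J : ℕ) (Z : Ω → ℕ) (S : ℕ → Ω → ℝ) : Ω → ℝ :=
  fun ω => ∑ z ∈ Finset.Icc 1 J, indic Z z ω * S z ω

/-- Observed outcome `Y := ∑_z 1(Z=z) ⬝ Y_z`. -/
def Yobs (J : ℕ) (Z : Ω → ℕ) (Y : ℕ → Ω → ℝ) : Ω → ℝ :=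
  fun ω => ∑ z ∈ Finset.Icc 1 J, indic Z z ω * Y z ω

/-- Principal score `p_z(X) := E[S_z | σ(X)]`, with conventions `p_0 := 0` and `p_{J+1} := 1`. -/
def pscore (P : Measure Ω) (X : Ω → 𝒳) (S : ℕ → Ω → ℝ) (J : ℕ) (z : ℕ) : Ω → ℝ :=
  if z = 0 then fun _ => 0 else if z = J + 1 then fun _ => 1 else P[S z | mX X]

/-- Treatment probability `π_z := P(Z = z)`. -/
def piZ (P : Measure Ω) (Z : Ω → ℕ) (z : ℕ) : ℝ := (P {ω | Z ω = z}).toReal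

/-- Principal stratum variable `G := ∑_{z=1}^J S_z`. -/
def Gsum (J : ℕ) (S : ℕ → Ω → ℝ) : Ω → ℝ := fun ω => ∑ z ∈ Finset.Icc 1 J, S z ω

/-- Real-valued indicator of the event `{G = g}`. -/
def indG (J : ℕ) (S : ℕ → Ω → ℝ) (g : ℕ) : Ω → ℝ :=
  Set.indicator {ω | Gsum J S ω = (g : ℝ)} (fun _ => (1 : ℝ))

/-- Principal score of the stratum `g` : `e_g(X) := E[1(G=g) | σ(X)]`. -/
def eg (P : Measure Ω) (X : Ω → 𝒳) (J : ℕ) (S : ℕ → Ω → ℝ) (g : ℕ) : Ω → ℝ :=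
  P[indG J S g | mX X]

/-- Basic setup: measurability, ranges, values and integrability of the primitives. -/
structure Setup (P : Measure Ω) (J : ℕ) (X : Ω → 𝒳) (Z : Ω → ℕ)
    (S Y : ℕ → Ω → ℝ) : Prop where
  hJ : 2 ≤ J
  hX : Measurable X
  hZ : Measurable Z
  hZr : ∀ ω, Z ω ∈ Finset.Icc 1 J
  hSm : ∀ z, Measurable (S z)
  hS01 : ∀ z ω, S z ω = 0 ∨ S z ω = 1
  hYm : ∀ z, Measurable (Y z)
  hYint : ∀ z, Integrable (Y z) P

/-- Randomization : `Z` is independent of `(X, S_1,…,S_J, Y_1,…,Y_J)` and `π_z > 0` for all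
`z ∈ {1,…,J}`. -/
def Randomization (P : Measure Ω) (J : ℕ) (X : Ω → 𝒳) (Z : Ω → ℕ)
    (S Y : ℕ → Ω → ℝ) : Prop :=
  IndepFun Z (fun ω => (X ω, fun z => S z ω, fun z => Y z ω)) P ∧
    ∀ z ∈ Finset.Icc 1 J, 0 < piZ P Z z

/-- Monotonicity : `S_{z'} ≤ S_z` a.s. whenever `z' ≤ z`. -/
def Monotonicity (P : Measure Ω) (J : ℕ) (S : ℕ → Ω → ℝ) : Prop :=
  ∀ z ∈ Finset.Icc 1 J, ∀ z' ∈ Finset.Icc 1 J, z' ≤ z → ∀ᵐ ω ∂P, S z' ω ≤ S z ω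

/-- Principal ignorability. -/
def PrincipalIgnorability (P : Measure Ω) (J : ℕ) (X : Ω → 𝒳)
    (S Y : ℕ → Ω → ℝ) : Prop :=
  ∀ z ∈ Finset.Icc 1 J, ∀ g ∈ Finset.Icc (J - z + 1) J, ∀ g' ∈ Finset.Icc (J - z + 1) J,
    (fun ω => (P[fun ω' => Y z ω' * indG J S g ω' | mX X]) ω * eg P X J S g' ω)
      =ᵐ[P] fun ω => (P[fun ω' => Y z ω' * indG J S g' ω' | mX X]) ω * eg P X J S g ω

/-- Positivity : the principal scores are uniformly bounded away from zero. -/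
def Positivity (P : Measure Ω) (J : ℕ) (X : Ω → 𝒳) (S : ℕ → Ω → ℝ) : Prop :=
  ∃ c : ℝ, 0 < c ∧ ∀ z ∈ Finset.Icc 1 J, ∀ᵐ ω ∂P, c ≤ pscore P X S J z ω

/-- Without monotonicity: indicator of the principal stratum described by the set
`A ⊆ {1,…,J}` of treatment levels under which the unit survives. -/
def indGv (J : ℕ) (S : ℕ → Ω → ℝ) (A : Finset ℕ) : Ω → ℝ :=
  Set.indicator {ω | ∀ w ∈ Finset.Icc 1 J, (S w ω = 1 ↔ w ∈ A)} (fun _ => (1 : ℝ))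

/-- Principal score of the stratum `A` : `e_A(X) := E[1(G=A) | σ(X)]`. -/
def egv (P : Measure Ω) (X : Ω → 𝒳) (J : ℕ) (S : ℕ → Ω → ℝ) (A : Finset ℕ) : Ω → ℝ :=
  P[indGv J S A | mX X]

/-- The monotone stratum `𝔤_g`, surviving exactly under levels `z ≥ J − g + 1`. -/
def monoPattern (J g : ℕ) : Finset ℕ := Finset.Icc (J - g + 1) J

/-- The collection `𝒬` of monotone strata. -/
def Qset (J : ℕ) : Finset (Finset ℕ) := (Finset.Icc 0 J).image (monoPattern J)

/-- All principal strata (subsets of `{1,…,J}`). -/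
def stratSet (J : ℕ) : Finset (Finset ℕ) := (Finset.Icc 1 J).powerset

/-- The harmed strata `𝒢 ∖ 𝒬`. -/
def nonQ (J : ℕ) : Finset (Finset ℕ) := (stratSet J).filter (fun A => A ∉ Qset J)

/-- Sensitivity ratio `ρ_A(X) := e_A(X)/e_{𝔤_r}(X)`. -/
def rhoA (P : Measure Ω) (X : Ω → 𝒳) (J r : ℕ) (S : ℕ → Ω → ℝ) (A : Finset ℕ) : Ω → ℝ :=
  fun ω => egv P X J S A ω / egv P X J S (monoPattern J r) ω

/-- `q_w(X) := ∑_{A ∉ 𝒬, w ∈ A} ρ_A(X)` for `w ∈ {1,…,J}`, with `q_0 := 0` and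
`q_{J+1} := ∑_{A ∉ 𝒬} ρ_A(X)`. -/
def qfun (P : Measure Ω) (X : Ω → 𝒳) (J r : ℕ) (S : ℕ → Ω → ℝ) (w : ℕ) : Ω → ℝ :=
  if w = 0 then fun _ => 0
  else if w ≤ J then
    fun ω => ∑ A ∈ (nonQ J).filter (fun A => w ∈ A), rhoA P X J r S A ω
  else fun ω => ∑ A ∈ nonQ J, rhoA P X J r S A ω

section Strata

omit [MeasurableSpace Ω]

variable {J : ℕ} {S : ℕ → Ω → ℝ} {Z : Ω → ℕ}

/-- The realized principal stratum `G(ω)`. -/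
def survivalSet (J : ℕ) (S : ℕ → Ω → ℝ) (ω : Ω) : Finset ℕ :=
  (Finset.Icc 1 J).filter fun w => S w ω = 1

lemma indGv_eq_ite {A : Finset ℕ} (hA : A ∈ stratSet J) (ω : Ω) :
    indGv J S A ω = if survivalSet J S ω = A then 1 else 0 := by
  have hAsub : A ⊆ Finset.Icc 1 J := Finset.mem_powerset.mp hA
  have hpattern : (∀ w ∈ Finset.Icc 1 J, (S w ω = 1 ↔ w ∈ A)) ↔ survivalSet J S ω = A := by
    simp only [survivalSet, Finset.ext_iff, Finset.mem_filter]
    refine ⟨fun h w => ⟨fun hw => (h w hw.1).mp hw.2, fun hwA => ⟨hAsub hwA, ?_⟩⟩,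
      fun h w hw => ⟨fun hs => (h w).mp ⟨hw, hs⟩, fun hwA => ((h w).mpr hwA).2⟩⟩
    exact (h w (hAsub hwA)).mpr hwA
  simp only [indGv, Set.indicator_apply, Set.mem_ofPred_eq, hpattern]

lemma sum_indGv_eq (hS01 : ∀ z ω, S z ω = 0 ∨ S z ω = 1) {z : ℕ}
    (hz : z ∈ Finset.Icc 1 J) :
    ∑ A ∈ (stratSet J).filter (z ∈ ·), indGv J S A = S z := by
  funext ω
  have hmem : survivalSet J S ω ∈ stratSet J :=
    Finset.mem_powerset.mpr (Finset.filter_subset _ _)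
  rw [Finset.sum_apply, Finset.sum_congr rfl fun A hA => indGv_eq_ite (Finset.mem_filter.mp hA).1 ω,
    Finset.sum_ite_eq]
  simp only [Finset.mem_filter, hmem, true_and]
  simp only [survivalSet, Finset.mem_filter, hz, true_and]
  rcases hS01 z ω with h | h <;> simp [h]

lemma indic_mul_sum_indic_mul {s : Finset ℕ} {z : ℕ} (hz : z ∈ s) (F : ℕ → Ω → ℝ) (ω : Ω) :
    indic Z z ω * ∑ w ∈ s, indic Z w ω * F w ω = indic Z z ω * F z ω := by
  by_cases h : Z ω = z
  · rw [Finset.sum_eq_single_of_mem z hz fun w _ hwz => by simp [indic, h, Ne.symm hwz]]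
    simp [indic, h]
  · simp [indic, h]

lemma Yobs_mul_Sobs_mul_indic {z : ℕ} (hz : z ∈ Finset.Icc 1 J) (Y : ℕ → Ω → ℝ) (ω : Ω) :
    Yobs J Z Y ω * Sobs J Z S ω * indic Z z ω = indic Z z ω * (Y z ω * S z ω) := by
  have hidem : indic Z z ω * indic Z z ω = indic Z z ω := by
    by_cases h : Z ω = z <;> simp [indic, h]
  calc Yobs J Z Y ω * Sobs J Z S ω * indic Z z ω
      = (indic Z z ω * Yobs J Z Y ω) * (indic Z z ω * Sobs J Z S ω) := by
        linear_combination Yobs J Z Y ω * Sobs J Z S ω * hidem.symm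
    _ = (indic Z z ω * Y z ω) * (indic Z z ω * S z ω) := by
        rw [Yobs, Sobs, indic_mul_sum_indic_mul hz, indic_mul_sum_indic_mul hz]
    _ = indic Z z ω * (Y z ω * S z ω) := by
        linear_combination Y z ω * S z ω * hidem

lemma indic_eq_indicator (z : ℕ) : indic Z z = (Z ⁻¹' {z}).indicator 1 := by
  funext ω
  by_cases h : Z ω = z <;> simp [indic, h]

end Strata

section Integrability

variable {P : Measure Ω} {J : ℕ} {S : ℕ → Ω → ℝ} {Z : Ω → ℕ}

lemma measurableSet_stratum (hSm : ∀ z, Measurable (S z)) (A : Finset ℕ) :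
    MeasurableSet {ω | ∀ w ∈ Finset.Icc 1 J, (S w ω = 1 ↔ w ∈ A)} := by
  have h : {ω | ∀ w ∈ Finset.Icc 1 J, (S w ω = 1 ↔ w ∈ A)}
      = ⋂ w ∈ (Finset.Icc 1 J : Finset ℕ), {ω | S w ω = 1 ↔ w ∈ A} := by
    ext ω
    simp
  rw [h]
  refine MeasurableSet.biInter (Finset.Icc 1 J).countable_toSet fun w _ => ?_
  by_cases hw : w ∈ A
  · simp only [hw, iff_true]
    exact hSm w (measurableSet_singleton 1)
  · simp only [hw, iff_false]
    exact (hSm w (measurableSet_singleton 1)).compl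

lemma integrable_indGv [IsFiniteMeasure P] (hSm : ∀ z, Measurable (S z)) (A : Finset ℕ) :
    Integrable (indGv J S A) P :=
  (integrable_const (1 : ℝ)).indicator (measurableSet_stratum hSm A)

lemma integrable_mul_indGv {f : Ω → ℝ} (hf : Integrable f P) (hSm : ∀ z, Measurable (S z))
    (A : Finset ℕ) : Integrable (fun ω => f ω * indGv J S A ω) P := by
  refine (hf.indicator (measurableSet_stratum (J := J) hSm A)).congr
    (Filter.Eventually.of_forall fun ω => ?_)
  simp only [indGv, Set.indicator_apply]
  split_ifs <;> simp

lemma integrable_indic [IsFiniteMeasure P] (hZ : Measurable Z) (z : ℕ) :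
    Integrable (indic Z z) P := by
  rw [indic_eq_indicator]
  exact (integrable_const 1).indicator (hZ (measurableSet_singleton z))

lemma integral_indic (hZ : Measurable Z) (z : ℕ) : ∫ ω, indic Z z ω ∂P = piZ P Z z := by
  rw [indic_eq_indicator, integral_indicator_one (hZ (measurableSet_singleton z))]
  rfl

end Integrability

lemma condExp_mul_of_indepFun {P : Measure Ω} [IsProbabilityMeasure P] {X : Ω → 𝒳}
    (hX : Measurable X) {g f : Ω → ℝ} (hg : Integrable g P) (hf : Integrable f P)
    (hind : IndepFun g (fun ω => (X ω, f ω)) P) :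
    (fun ω => (∫ ω', g ω' ∂P) * (P[f | mX X]) ω) =ᵐ[P] P[g * f | mX X] := by
  have hm : mX X ≤ ‹MeasurableSpace Ω› := hX.comap_le
  have hgf : Integrable (g * f) P :=
    (hind.comp measurable_id measurable_snd).integrable_mul hg hf
  refine ae_eq_condExp_of_forall_setIntegral_eq hm hgf
    (fun _ _ _ => (integrable_condExp.const_mul _).integrableOn) ?_
    (stronglyMeasurable_condExp.aestronglyMeasurable.const_mul _)
  rintro _ ⟨t, ht, rfl⟩ -
  have hφ : Measurable fun p : 𝒳 × ℝ => t.indicator 1 p.1 * p.2 :=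
    ((measurable_const.indicator ht).comp measurable_fst).mul measurable_snd
  have hrestrict : ∀ h : Ω → ℝ,
      ∫ ω in X ⁻¹' t, h ω ∂P = ∫ ω, t.indicator 1 (X ω) * h ω ∂P := fun h => by
    rw [← integral_indicator (hX ht)]
    congr 1
    funext ω
    by_cases hω : X ω ∈ t <;> simp [hω]
  have hprod := (hind.comp measurable_id hφ).integral_fun_mul_eq_mul_integral
    hg.aestronglyMeasurable
    (((measurable_const.indicator ht).comp hX).aestronglyMeasurable.mul hf.1)
  rw [integral_const_mul, setIntegral_condExp hm hf ⟨t, ht, rfl⟩, hrestrict, hrestrict]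
  calc (∫ ω, g ω ∂P) * ∫ ω, t.indicator 1 (X ω) * f ω ∂P
      = ∫ ω, g ω * (t.indicator 1 (X ω) * f ω) ∂P := hprod.symm
    _ = ∫ ω, t.indicator 1 (X ω) * (g * f) ω ∂P := by
      congr 1
      funext ω
      simp only [Pi.mul_apply]
      ring

section Identification

variable {P : Measure Ω} {J : ℕ} {X : Ω → 𝒳} {Z : Ω → ℕ}
  {S Y : ℕ → Ω → ℝ} {z : ℕ}

lemma pscore_of_mem (hz : z ∈ Finset.Icc 1 J) : pscore P X S J z = P[S z | mX X] := by
  obtain ⟨hz1, hzJ⟩ := Finset.mem_Icc.mp hz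
  rw [pscore, if_neg (by omega), if_neg (by omega)]

lemma integrable_mul_S (hset : Setup P J X Z S Y) (z : ℕ) :
    Integrable (fun ω => Y z ω * S z ω) P :=
  (hset.hYint z).mul_bdd (hset.hSm z).aestronglyMeasurable (c := 1)
    (Filter.Eventually.of_forall fun ω => by rcases hset.hS01 z ω with h | h <;> simp [h])

lemma condExp_Yobs_mul_Sobs_mul_indic [IsProbabilityMeasure P] (hset : Setup P J X Z S Y)
    (hrand : Randomization P J X Z S Y) (hz : z ∈ Finset.Icc 1 J) :
    (fun ω => piZ P Z z * (P[fun ω' => Y z ω' * S z ω' | mX X]) ω)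
      =ᵐ[P] P[fun ω => Yobs J Z Y ω * Sobs J Z S ω * indic Z z ω | mX X] := by
  have hψ : Measurable fun n : ℕ => if n = z then (1 : ℝ) else 0 := measurable_from_nat
  have hφ : Measurable fun p : 𝒳 × (ℕ → ℝ) × (ℕ → ℝ) => (p.1, p.2.2 z * p.2.1 z) :=
    measurable_fst.prodMk (((measurable_pi_apply z).comp (measurable_snd.comp measurable_snd)).mul
      ((measurable_pi_apply z).comp (measurable_fst.comp measurable_snd)))
  have hind : IndepFun (indic Z z) (fun ω => (X ω, Y z ω * S z ω)) P := hrand.1.comp hψ hφ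
  have hobs : (fun ω => Yobs J Z Y ω * Sobs J Z S ω * indic Z z ω)
      = indic Z z * fun ω => Y z ω * S z ω :=
    funext (Yobs_mul_Sobs_mul_indic hz Y)
  rw [hobs, ← integral_indic (P := P) hset.hZ z]
  exact condExp_mul_of_indepFun hset.hX (integrable_indic hset.hZ z) (integrable_mul_S hset z) hind

/-- Extended principal ignorability, summed over the strata surviving under `z`. -/
lemma egv_mul_condExp_Y_mul_S [IsFiniteMeasure P] (hset : Setup P J X Z S Y)
    (hz : z ∈ Finset.Icc 1 J) {A : Finset ℕ}
    (hEPI : ∀ A' ∈ stratSet J, z ∈ A' →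
      (fun ω => (P[fun ω' => Y z ω' * indGv J S A' ω' | mX X]) ω * egv P X J S A ω)
        =ᵐ[P] fun ω => (P[fun ω' => Y z ω' * indGv J S A ω' | mX X]) ω * egv P X J S A' ω) :
    (fun ω => egv P X J S A ω * (P[fun ω' => Y z ω' * S z ω' | mX X]) ω)
      =ᵐ[P] fun ω => (P[fun ω' => Y z ω' * indGv J S A ω' | mX X]) ω * (P[S z | mX X]) ω := by
  set T := (stratSet J).filter (z ∈ ·)
  have hdecompYS : P[fun ω => Y z ω * S z ω | mX X]
      =ᵐ[P] ∑ A' ∈ T, P[fun ω => Y z ω * indGv J S A' ω | mX X] := by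
    have h : (fun ω => Y z ω * S z ω) = ∑ A' ∈ T, fun ω => Y z ω * indGv J S A' ω := by
      funext ω
      rw [← sum_indGv_eq hset.hS01 hz, Finset.sum_apply, Finset.sum_apply, Finset.mul_sum]
    rw [h]
    exact condExp_finsetSum (fun A' _ => integrable_mul_indGv (hset.hYint z) hset.hSm A') _
  have hdecompS : P[S z | mX X] =ᵐ[P] ∑ A' ∈ T, egv P X J S A' := by
    conv_lhs => rw [← sum_indGv_eq hset.hS01 hz]
    exact condExp_finsetSum (fun A' _ => integrable_indGv hset.hSm A') _
  have hEPIall : ∀ᵐ ω ∂P, ∀ A' ∈ T,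
      (P[fun ω' => Y z ω' * indGv J S A' ω' | mX X]) ω * egv P X J S A ω
        = (P[fun ω' => Y z ω' * indGv J S A ω' | mX X]) ω * egv P X J S A' ω :=
    (ae_ball_iff T.countable_toSet).2 fun A' hA' =>
      hEPI A' (Finset.mem_filter.mp hA').1 (Finset.mem_filter.mp hA').2
  filter_upwards [hdecompYS, hdecompS, hEPIall] with ω hYS hS hcross
  rw [hYS, hS, Finset.sum_apply, Finset.sum_apply, Finset.mul_sum, Finset.mul_sum]
  exact Finset.sum_congr rfl fun A' hA' => (mul_comm _ _).trans (hcross A' hA')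

end Identification

/-- **identification without monotonicity under extended principal
ignorability.** For every `z ∈ {1,…,J}` and every stratum `A` with `z ∈ A`,
`E[Y_z·1(G=A)] = E[e_A(X)·m_z(X)]`. -/
theorem statement19 (P : Measure Ω) [IsProbabilityMeasure P] (J : ℕ)
    (X : Ω → 𝒳) (Z : Ω → ℕ) (S Y : ℕ → Ω → ℝ)
    (hset : Setup P J X Z S Y)
    (hrand : Randomization P J X Z S Y)
    (hEPI : ∀ z ∈ Finset.Icc 1 J, ∀ A ∈ stratSet J, ∀ A' ∈ stratSet J,
      z ∈ A → z ∈ A' →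
      (fun ω => (P[fun ω' => Y z ω' * indGv J S A ω' | mX X]) ω * egv P X J S A' ω)
        =ᵐ[P] fun ω =>
          (P[fun ω' => Y z ω' * indGv J S A' ω' | mX X]) ω * egv P X J S A ω)
    (hpos : Positivity P J X S) :
    ∀ z ∈ Finset.Icc 1 J, ∀ A ∈ stratSet J, z ∈ A →
      ∀ mz : Ω → ℝ, Measurable[mX X] mz →
      ((fun ω => mz ω * piZ P Z z * pscore P X S J z ω)
        =ᵐ[P] P[fun ω => Yobs J Z Y ω * Sobs J Z S ω * indic Z z ω | mX X]) →
      ∫ ω, Y z ω * indGv J S A ω ∂P = ∫ ω, egv P X J S A ω * mz ω ∂P := by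
  intro z hz A hA hzA mz _ hmz
  obtain ⟨c, hc, hcp⟩ := hpos
  have hπ : piZ P Z z ≠ 0 := (hrand.2 z hz).ne'
  have hmp : (fun ω => mz ω * (P[S z | mX X]) ω)
      =ᵐ[P] P[fun ω' => Y z ω' * S z ω' | mX X] := by
    filter_upwards [hmz, condExp_Yobs_mul_Sobs_mul_indic hset hrand hz] with ω h1 h2
    refine mul_left_cancel₀ hπ ?_
    rw [h2, ← h1, pscore_of_mem hz]
    ring
  have hEA : (fun ω => egv P X J S A ω * mz ω)
      =ᵐ[P] P[fun ω' => Y z ω' * indGv J S A ω' | mX X] := by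
    filter_upwards [hmp, egv_mul_condExp_Y_mul_S hset hz fun A' hA' hzA' =>
      hEPI z hz A' hA' A hA hzA' hzA, hcp z hz] with ω h1 h2 h3
    have hp : (P[S z | mX X]) ω ≠ 0 := by
      rw [← pscore_of_mem hz]
      exact (hc.trans_le h3).ne'
    refine mul_right_cancel₀ hp ?_
    rw [← h2, ← h1]
    ring
  have hm : mX X ≤ ‹MeasurableSpace Ω› := hset.hX.comap_le
  rw [integral_congr_ae hEA, integral_condExp hm]

end TruncationByDeath
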